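/- Let u : ℝⁿ → ℝ be semiconcave with constant C, and suppose u is a viscosity supersolution of g(Du,Du) = −1 in the sense that g(v,v) ≥ −1 for every v ∈ D⁻u(x) and every x, and u is differentiable almost everywhere with g(∇u(x),∇u(x)) = −1 at every point of differentiability. Then every reachable gradient v ∈ D*u(x) (limit of gradients ∇u(x_k) at differentiability points x_k → x) satisfies g(v,v) = −1, and every supergradient w ∈ D⁺u(x) = co D*u(x), being a convex combination of vectors on the set {v : g(v,v) = −1}, satisfies g(w,w) ≤ −1 provided all elements of D*u(x) lie in the same (past) component of the timelike cone. -/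

import Mathlib

variable {n : ℕ}

open Finset in
/-- Standard Minkowski form of signature (−,+,…,+) on ℝ^{n+1}. -/
def minkE (n : ℕ) (v w : EuclideanSpace ℝ (Fin (n+1))) : ℝ :=
  (∑ i, v i * w i) - 2 * v 0 * w 0

/-- `v` is a (Fréchet) supergradient of `f` at `p`. -/
def IsSuperGradAt (f : EuclideanSpace ℝ (Fin (n+1)) → ℝ)
    (p v : EuclideanSpace ℝ (Fin (n+1))) : Prop :=
  ∀ ε > (0:ℝ), ∃ δ > (0:ℝ), ∀ y, ‖y - p‖ < δ →
    f y ≤ f p + (inner ℝ v (y - p) : ℝ) + ε * ‖y - p‖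

/-- `v` is a (Fréchet) subgradient of `f` at `p`. -/
def IsSubGradAt (f : EuclideanSpace ℝ (Fin (n+1)) → ℝ)
    (p v : EuclideanSpace ℝ (Fin (n+1))) : Prop :=
  ∀ ε > (0:ℝ), ∃ δ > (0:ℝ), ∀ y, ‖y - p‖ < δ →
    f y ≥ f p + (inner ℝ v (y - p) : ℝ) - ε * ‖y - p‖

/-- `v` is a reachable gradient of `u` at `x`. -/
def IsReachableGrad (u : EuclideanSpace ℝ (Fin (n+1)) → ℝ)
    (x v : EuclideanSpace ℝ (Fin (n+1))) : Prop :=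
  ∃ xk : ℕ → EuclideanSpace ℝ (Fin (n+1)),
    (∀ k, DifferentiableAt ℝ u (xk k)) ∧
    Filter.Tendsto xk Filter.atTop (nhds x) ∧
    Filter.Tendsto (fun k => gradient u (xk k)) Filter.atTop (nhds v)

open Filter Set Metric

set_option maxHeartbeats 1000000

lemma concave_le_tangent {E : Type*} [NormedAddCommGroup E] [NormedSpace ℝ E]
    {φ : E → ℝ} (hφ : ConcaveOn ℝ Set.univ φ) {p : E} {L : E →L[ℝ] ℝ}
    (hd : HasFDerivAt φ L p) (z : E) : φ z ≤ φ p + L (z - p) := by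
  set ψ : ℝ → ℝ := fun s => φ (p + s • (z - p)) with hψdef
  have h1 : HasDerivAt (fun s : ℝ => p + s • (z - p)) (z - p) 0 := by
    simpa using ((hasDerivAt_id (0:ℝ)).smul_const (z - p)).const_add p
  have hd' : HasFDerivAt φ L (p + (0:ℝ) • (z - p)) := by simpa using hd
  have hψ : HasDerivAt ψ (L (z - p)) 0 := by
    have := hd'.comp_hasDerivAt (f := fun s : ℝ => p + s • (z - p)) 0 h1
    exact this
  have hslope : Tendsto (slope ψ 0) (nhdsWithin 0 (Set.Ioi 0)) (nhds (L (z - p))) :=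
    (hasDerivAt_iff_tendsto_slope.mp hψ).mono_left
      (nhdsWithin_mono _ (fun s hs => ne_of_gt hs))
  have hev : ∀ᶠ s in nhdsWithin 0 (Set.Ioi (0:ℝ)), φ z - φ p ≤ slope ψ 0 s := by
    filter_upwards [Ioc_mem_nhdsGT_of_mem (Set.mem_Ico.mpr ⟨le_refl (0:ℝ), zero_lt_one⟩)]
      with s hs
    obtain ⟨hs0, hs1⟩ := hs
    have hcc := hφ.2 (Set.mem_univ p) (Set.mem_univ z) (sub_nonneg.mpr hs1) (le_of_lt hs0)
      (by ring)
    have hpt : (1 - s) • p + s • z = p + s • (z - p) := by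
      rw [smul_sub, sub_smul, one_smul]; abel
    rw [hpt] at hcc
    simp only [smul_eq_mul] at hcc
    have hψs : φ p + s * (φ z - φ p) ≤ ψ s := by simp only [hψdef]; nlinarith
    have hψ0 : ψ 0 = φ p := by simp [hψdef]
    rw [slope_def_field, le_div_iff₀ (by linarith : (0:ℝ) < s - 0)]
    rw [hψ0]; nlinarith
  have := ge_of_tendsto hslope hev
  linarith [this]

lemma grad_inner_eq {n : ℕ} (u : EuclideanSpace ℝ (Fin (n+1)) → ℝ)
    (p y : EuclideanSpace ℝ (Fin (n+1))) :
    (inner ℝ (gradient u p) y : ℝ) = fderiv ℝ u p y :=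
  InnerProductSpace.toDual_symm_apply

lemma semiconcave_tangent {n : ℕ} {u : EuclideanSpace ℝ (Fin (n+1)) → ℝ} {C : ℝ}
    (hsc : ConcaveOn ℝ Set.univ (fun x => u x - C / 2 * ‖x‖ ^ 2))
    {p : EuclideanSpace ℝ (Fin (n+1))} (hd : DifferentiableAt ℝ u p)
    (z : EuclideanSpace ℝ (Fin (n+1))) :
    u z ≤ u p + (inner ℝ (gradient u p) (z - p) : ℝ) + C / 2 * ‖z - p‖ ^ 2 := by
  have hns : HasFDerivAt (fun y : EuclideanSpace ℝ (Fin (n+1)) => C / 2 * ‖y‖ ^ 2)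
      ((C/2) • (2 • (innerSL ℝ p))) p :=
    ((hasStrictFDerivAt_norm_sq p).hasFDerivAt).const_mul (C/2)
  have hφd : HasFDerivAt (fun y : EuclideanSpace ℝ (Fin (n+1)) => u y - C / 2 * ‖y‖ ^ 2)
      (fderiv ℝ u p - (C/2) • (2 • (innerSL ℝ p))) p := (hd.hasFDerivAt).sub hns
  have key := concave_le_tangent hsc hφd z
  simp only [ContinuousLinearMap.sub_apply, ContinuousLinearMap.smul_apply,
    innerSL_apply_apply, smul_eq_mul, nsmul_eq_mul] at key
  have hexp : ‖z‖ ^ 2 = ‖p‖ ^ 2 + 2 * (inner ℝ p (z - p) : ℝ) + ‖z - p‖ ^ 2 := by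
    have := norm_add_sq_real p (z - p)
    simpa using this
  push_cast at key
  rw [hexp] at key
  rw [grad_inner_eq]
  linarith

lemma u_continuous {n : ℕ} {u : EuclideanSpace ℝ (Fin (n+1)) → ℝ} {C : ℝ}
    (hsc : ConcaveOn ℝ Set.univ (fun x => u x - C / 2 * ‖x‖ ^ 2)) :
    Continuous u := by
  have h1 : Continuous (fun x : EuclideanSpace ℝ (Fin (n+1)) => u x - C / 2 * ‖x‖ ^ 2) := by
    exact continuousOn_univ.mp (hsc.continuousOn isOpen_univ)
  have h2 : Continuous (fun x : EuclideanSpace ℝ (Fin (n+1)) => C / 2 * ‖x‖ ^ 2) := by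
    continuity
  have : u = fun x => (u x - C / 2 * ‖x‖ ^ 2) + C / 2 * ‖x‖ ^ 2 := by
    funext x; ring
  rw [this]; exact h1.add h2

lemma diff_dense {n : ℕ} {u : EuclideanSpace ℝ (Fin (n+1)) → ℝ}
    (hae : ∀ᵐ x ∂(MeasureTheory.volume), DifferentiableAt ℝ u x)
    (y : EuclideanSpace ℝ (Fin (n+1))) {r : ℝ} (hr : 0 < r) :
    ∃ p, dist p y < r ∧ DifferentiableAt ℝ u p := by
  by_contra hcon
  push_neg at hcon
  have hsub : ball y r ⊆ {p | ¬ DifferentiableAt ℝ u p} := by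
    intro p hp
    exact hcon p (mem_ball.mp hp)
  have h0 : MeasureTheory.volume {p : EuclideanSpace ℝ (Fin (n+1)) | ¬ DifferentiableAt ℝ u p} = 0 := by
    rw [← MeasureTheory.ae_iff] at *
    exact hae
  have := MeasureTheory.measure_mono_null hsub h0
  exact absurd this (ne_of_gt (measure_ball_pos _ y hr))

lemma grad_bound {n : ℕ} {u : EuclideanSpace ℝ (Fin (n+1)) → ℝ} {C : ℝ}
    (hsc : ConcaveOn ℝ Set.univ (fun x => u x - C / 2 * ‖x‖ ^ 2))
    (x : EuclideanSpace ℝ (Fin (n+1))) :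
    ∃ M : ℝ, 0 ≤ M ∧ ∀ p, ‖p - x‖ ≤ 1 → DifferentiableAt ℝ u p → ‖gradient u p‖ ≤ M := by
  obtain ⟨M₀, hM₀⟩ := (isCompact_closedBall x 3).exists_bound_of_continuousOn
    ((u_continuous hsc).continuousOn)
  have hM₀0 : 0 ≤ M₀ := le_trans (norm_nonneg _) (hM₀ x (mem_closedBall_self (by norm_num)))
  refine ⟨2 * M₀ + |C| / 2, by positivity, ?_⟩
  intro p hp hd
  set g := gradient u p with hg
  rcases eq_or_ne g 0 with h0 | h0
  · rw [h0]; simp; positivity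
  · set z := p - ‖g‖⁻¹ • g with hz
    have hzp : z - p = -(‖g‖⁻¹ • g) := by rw [hz]; abel
    have hgn : (0:ℝ) < ‖g‖ := norm_pos_iff.mpr h0
    have hnz : ‖z - p‖ = 1 := by
      rw [hzp, norm_neg, norm_smul, norm_inv, norm_norm, inv_mul_cancel₀ (ne_of_gt hgn)]
    have hin : (inner ℝ g (z - p) : ℝ) = -‖g‖ := by
      rw [hzp, inner_neg_right, real_inner_smul_right, real_inner_self_eq_norm_sq]
      field_simp
    have htan := semiconcave_tangent hsc hd z
    rw [hin, hnz] at htan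
    have hpK : p ∈ closedBall x 3 := by
      rw [mem_closedBall, dist_eq_norm]; linarith
    have hzK : z ∈ closedBall x 3 := by
      rw [mem_closedBall, dist_eq_norm]
      have : z - x = (z - p) + (p - x) := by abel
      calc ‖z - x‖ ≤ ‖z - p‖ + ‖p - x‖ := by rw [this]; exact norm_add_le _ _
        _ ≤ 3 := by rw [hnz]; linarith
    have h1 := hM₀ p hpK
    have h2 := hM₀ z hzK
    rw [Real.norm_eq_abs] at h1 h2
    have hC : C / 2 ≤ |C| / 2 := by
      have := le_abs_self C; linarith
    have := abs_le.mp h1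
    have := abs_le.mp h2
    linarith [abs_le.mp h1, abs_le.mp h2]

lemma lemA {n : ℕ} {u : EuclideanSpace ℝ (Fin (n+1)) → ℝ} {C : ℝ}
    (hsc : ConcaveOn ℝ Set.univ (fun x => u x - C / 2 * ‖x‖ ^ 2))
    (hae : ∀ᵐ x ∂(MeasureTheory.volume), DifferentiableAt ℝ u x)
    {x w : EuclideanSpace ℝ (Fin (n+1))} (hw : IsSuperGradAt u x w)
    (h : EuclideanSpace ℝ (Fin (n+1))) :
    ∃ v, IsReachableGrad u x v ∧ (inner ℝ v h : ℝ) ≤ (inner ℝ w h : ℝ) := by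
  obtain ⟨M, hM0, hM⟩ := grad_bound hsc x
  set t : ℕ → ℝ := fun k => 1 / ((‖h‖ + 1) * (k + 1)) with ht
  have hh1 : (0:ℝ) < ‖h‖ + 1 := by positivity
  have htpos : ∀ k, 0 < t k := fun k => by positivity
  have ht1 : ∀ k : ℕ, t k * (‖h‖ + 1) = 1 / (k + 1) := by
    intro k; simp only [ht]; field_simp
  have htle : ∀ k : ℕ, t k ≤ 1 := by
    intro k
    rw [ht]
    rw [div_le_one (by positivity)]
    nlinarith [mul_nonneg (norm_nonneg h) (Nat.cast_nonneg k : (0:ℝ) ≤ k),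
      norm_nonneg h, (Nat.cast_nonneg k : (0:ℝ) ≤ k)]
  -- choose differentiable points
  have hex : ∀ k : ℕ, ∃ p, dist p (x + t k • h) < (t k) ^ 2 ∧ DifferentiableAt ℝ u p :=
    fun k => diff_dense hae _ (by positivity)
  choose p hpd hpdiff using hex
  have hpx : ∀ k, ‖p k - x‖ ≤ 1 / (k + 1) := by
    intro k
    have h1 : ‖p k - (x + t k • h)‖ ≤ (t k)^2 := le_of_lt (by
      rw [← dist_eq_norm]; exact hpd k)
    have h2 : p k - x = (p k - (x + t k • h)) + t k • h := by abel
    calc ‖p k - x‖ ≤ ‖p k - (x + t k • h)‖ + ‖t k • h‖ := by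
          rw [h2]; exact norm_add_le _ _
      _ ≤ (t k)^2 + t k * ‖h‖ := by
          rw [norm_smul, Real.norm_eq_abs, abs_of_pos (htpos k)]; linarith
      _ ≤ t k * (‖h‖ + 1) := by nlinarith [htpos k, htle k]
      _ = 1 / (k + 1) := ht1 k
  have hpx1 : ∀ k, ‖p k - x‖ ≤ 1 := fun k => le_trans (hpx k) (by
    rw [div_le_one (by positivity)]; linarith [(Nat.cast_nonneg k : (0:ℝ) ≤ k)])
  have hgb : ∀ k, gradient u (p k) ∈ closedBall (0 : EuclideanSpace ℝ (Fin (n+1))) M := by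
    intro k
    rw [mem_closedBall, dist_zero_right]
    exact hM (p k) (hpx1 k) (hpdiff k)
  obtain ⟨v, hvM, σ, hσ, hσtend⟩ := (isCompact_closedBall _ _).tendsto_subseq hgb
  have hpxtend : Tendsto (fun k => p k) atTop (nhds x) := by
    rw [tendsto_iff_norm_sub_tendsto_zero]
    apply squeeze_zero (fun k => norm_nonneg _) hpx
    exact tendsto_one_div_add_atTop_nhds_zero_nat
  refine ⟨v, ⟨p ∘ σ, fun k => hpdiff (σ k), hpxtend.comp hσ.tendsto_atTop, hσtend⟩, ?_⟩
  -- the inequality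
  apply le_of_forall_pos_le_add
  intro ε hε
  set B := M + ‖w‖ + |C| / 2 * (‖h‖ + 1)^2 with hB
  have hB0 : 0 ≤ B := by positivity
  obtain ⟨δ, hδ0, hδ⟩ := hw (ε / (2 * (‖h‖ + 1))) (by positivity)
  have hev : ∀ᶠ k in atTop, (inner ℝ (gradient u (p k)) h : ℝ) ≤ (inner ℝ w h : ℝ) + ε := by
    have hev1 : ∀ᶠ k : ℕ in atTop, ‖p k - x‖ < δ := by
      have : Tendsto (fun k : ℕ => ‖p k - x‖) atTop (nhds 0) :=
        squeeze_zero (fun k => norm_nonneg _) hpx tendsto_one_div_add_atTop_nhds_zero_nat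
      exact this.eventually_lt_const hδ0
    have hev2 : ∀ᶠ k : ℕ in atTop, B * t k ≤ ε / 2 := by
      have htt : Tendsto t atTop (nhds 0) := by
        apply squeeze_zero (fun k => (htpos k).le)
          (fun k => ?_) tendsto_one_div_add_atTop_nhds_zero_nat
        have hk : (0:ℝ) < (k:ℝ)+1 := by positivity
        rw [ht]
        exact one_div_le_one_div_of_le hk (by nlinarith [norm_nonneg h, hk])
      have : Tendsto (fun k => B * t k) atTop (nhds 0) := by
        rw [show (0:ℝ) = B * 0 by ring]; exact htt.const_mul B
      exact this.eventually_le_const (by positivity)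
    filter_upwards [hev1, hev2] with k h1 h2
    set g := gradient u (p k) with hg
    set d := p k - x with hd
    have htan := semiconcave_tangent hsc (hpdiff k) x
    have hsup := hδ (p k) h1
    -- combine
    have hcomb : (inner ℝ g d : ℝ) ≤ (inner ℝ w d : ℝ) + ε / (2 * (‖h‖ + 1)) * ‖d‖ + |C| / 2 * ‖d‖^2 := by
      have hxg : (inner ℝ g (x - p k) : ℝ) = -(inner ℝ g d : ℝ) := by
        rw [hd, ← inner_neg_right]; congr 1; abel
      have hnd : ‖x - p k‖ = ‖d‖ := by rw [hd, ← norm_neg]; congr 1; abel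
      rw [hxg, hnd] at htan
      have hCle : C / 2 * ‖d‖^2 ≤ |C| / 2 * ‖d‖^2 := by
        have := le_abs_self C
        nlinarith [sq_nonneg ‖d‖]
      linarith [htan, hsup]
    -- decompose d
    have hde : d = t k • h + (d - t k • h) := by abel
    have he : ‖d - t k • h‖ ≤ (t k)^2 := by
      have : d - t k • h = p k - (x + t k • h) := by rw [hd]; abel
      rw [this, ← dist_eq_norm]; exact (hpd k).le
    have hgd : t k * (inner ℝ g h : ℝ) - M * (t k)^2 ≤ (inner ℝ g d : ℝ) := by
      have : (inner ℝ g d : ℝ) = t k * (inner ℝ g h : ℝ) + (inner ℝ g (d - t k • h) : ℝ) := by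
        conv_lhs => rw [hde]
        rw [inner_add_right, real_inner_smul_right]
      rw [this]
      have habs : |(inner ℝ g (d - t k • h) : ℝ)| ≤ M * (t k)^2 := by
        calc |(inner ℝ g (d - t k • h) : ℝ)| ≤ ‖g‖ * ‖d - t k • h‖ := abs_real_inner_le_norm _ _
          _ ≤ M * (t k)^2 := by
              apply mul_le_mul (hM (p k) (hpx1 k) (hpdiff k)) he (norm_nonneg _) hM0
      linarith [(abs_le.mp habs).1, (abs_le.mp habs).2]
    have hwd : (inner ℝ w d : ℝ) ≤ t k * (inner ℝ w h : ℝ) + ‖w‖ * (t k)^2 := by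
      have : (inner ℝ w d : ℝ) = t k * (inner ℝ w h : ℝ) + (inner ℝ w (d - t k • h) : ℝ) := by
        conv_lhs => rw [hde]
        rw [inner_add_right, real_inner_smul_right]
      rw [this]
      have habs : |(inner ℝ w (d - t k • h) : ℝ)| ≤ ‖w‖ * (t k)^2 := by
        calc |(inner ℝ w (d - t k • h) : ℝ)| ≤ ‖w‖ * ‖d - t k • h‖ := abs_real_inner_le_norm _ _
          _ ≤ ‖w‖ * (t k)^2 := by
              apply mul_le_mul_of_nonneg_left he (norm_nonneg _)
      linarith [(abs_le.mp habs).1, (abs_le.mp habs).2]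
    have hdn : ‖d‖ ≤ t k * (‖h‖ + 1) := by
      rw [hd]
      calc ‖p k - x‖ ≤ 1/(k+1) := hpx k
        _ = t k * (‖h‖+1) := (ht1 k).symm
    -- final chain
    have hεh : ε / (2 * (‖h‖ + 1)) * (t k * (‖h‖ + 1)) = t k * (ε / 2) := by
      field_simp
    have hmain : t k * (inner ℝ g h : ℝ) ≤ t k * ((inner ℝ w h : ℝ) + B * t k + ε / 2) := by
      have hd0 : 0 ≤ ‖d‖ := norm_nonneg _
      have hεpos : 0 < ε / (2 * (‖h‖ + 1)) := by positivity
      have h1' : ε / (2 * (‖h‖ + 1)) * ‖d‖ ≤ t k * (ε / 2) := by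
        rw [← hεh]
        exact mul_le_mul_of_nonneg_left hdn hεpos.le
      have hsq : ‖d‖^2 ≤ (t k * (‖h‖+1))^2 := by
        have := mul_self_le_mul_self hd0 hdn
        nlinarith [this]
      have h2' : |C| / 2 * ‖d‖^2 ≤ |C| / 2 * (‖h‖+1)^2 * (t k)^2 := by
        calc |C| / 2 * ‖d‖^2 ≤ |C| / 2 * (t k * (‖h‖+1))^2 :=
              mul_le_mul_of_nonneg_left hsq (by positivity)
          _ = |C| / 2 * (‖h‖+1)^2 * (t k)^2 := by ring
      rw [hB]
      linarith [hgd, hwd, hcomb, h1', h2']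
    have hdiv := le_of_mul_le_mul_left hmain (htpos k)
    linarith [hdiv, h2]
  have htinner : Tendsto (fun k => (inner ℝ (gradient u (p (σ k))) h : ℝ)) atTop
      (nhds ((inner ℝ v h : ℝ))) := by
    exact (Tendsto.inner hσtend tendsto_const_nhds)
  exact le_of_tendsto htinner ((hσ.tendsto_atTop.eventually hev))

section K
variable (n : ℕ)

noncomputable def Amap (v : EuclideanSpace ℝ (Fin (n+1))) : EuclideanSpace ℝ (Fin (n+1)) :=
  EuclideanSpace.single 0 1 + (v - v 0 • EuclideanSpace.single 0 1)

def Kset : Set (EuclideanSpace ℝ (Fin (n+1))) := {v | v 0 + ‖Amap n v‖ ≤ 0}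

lemma Amap_apply (v : EuclideanSpace ℝ (Fin (n+1))) (i : Fin (n+1)) :
    Amap n v i = if i = 0 then 1 else v i := by
  simp only [Amap, PiLp.add_apply, PiLp.sub_apply, PiLp.smul_apply,
    EuclideanSpace.single_apply, smul_eq_mul]
  by_cases h : i = 0
  · subst h; simp
  · simp [h]

lemma Amap_sq (v : EuclideanSpace ℝ (Fin (n+1))) :
    ‖Amap n v‖ ^ 2 = 1 + (minkE n v v + v 0 ^ 2) := by
  have h1 : ‖Amap n v‖ ^ 2 = ∑ i, (Amap n v i) ^ 2 := by
    rw [EuclideanSpace.norm_eq, Real.sq_sqrt (by positivity)]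
    congr 1; funext i; rw [Real.norm_eq_abs, sq_abs]
  rw [h1]
  have h2 : ∑ i, (Amap n v i) ^ 2 = 1 + ∑ i : Fin n, (v i.succ) ^ 2 := by
    rw [Fin.sum_univ_succ]
    congr 1
    · rw [Amap_apply]; simp
    · apply Finset.sum_congr rfl
      intro i _
      rw [Amap_apply]
      simp [Fin.succ_ne_zero i]
  have h3 : ∑ i, v i * v i = v 0 * v 0 + ∑ i : Fin n, v i.succ * v i.succ :=
    Fin.sum_univ_succ _
  rw [h2]
  simp only [minkE]
  rw [h3]
  have : ∑ i : Fin n, (v i.succ)^2 = ∑ i : Fin n, v i.succ * v i.succ := by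
    apply Finset.sum_congr rfl; intro i _; ring
  rw [this]; ring

lemma Kset_convex : Convex ℝ (Kset n) := by
  intro x hx y hy a b ha hb hab
  have hA : Amap n (a • x + b • y) = a • Amap n x + b • Amap n y := by
    ext i
    rw [Amap_apply]
    simp only [PiLp.add_apply, PiLp.smul_apply, smul_eq_mul, Amap_apply]
    by_cases h : i = 0 <;> simp [h] <;> nlinarith [hab]
  have hx0 : (a • x + b • y) 0 = a * x 0 + b * y 0 := by
    simp [PiLp.add_apply, PiLp.smul_apply, smul_eq_mul]
  have hnorm : ‖Amap n (a • x + b • y)‖ ≤ a * ‖Amap n x‖ + b * ‖Amap n y‖ := by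
    rw [hA]
    calc ‖a • Amap n x + b • Amap n y‖ ≤ ‖a • Amap n x‖ + ‖b • Amap n y‖ := norm_add_le _ _
      _ = a * ‖Amap n x‖ + b * ‖Amap n y‖ := by
          rw [norm_smul, norm_smul, Real.norm_eq_abs, Real.norm_eq_abs,
            abs_of_nonneg ha, abs_of_nonneg hb]
  have hxK : x 0 + ‖Amap n x‖ ≤ 0 := hx
  have hyK : y 0 + ‖Amap n y‖ ≤ 0 := hy
  show (a • x + b • y) 0 + ‖Amap n (a • x + b • y)‖ ≤ 0
  rw [hx0]
  nlinarith [hnorm, hxK, hyK]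

lemma Kset_closed : IsClosed (Kset n) := by
  have hc0 : Continuous (fun v : EuclideanSpace ℝ (Fin (n+1)) => v 0) :=
    (EuclideanSpace.proj (0 : Fin (n+1))).continuous
  have hcA : Continuous (Amap n) := by
    unfold Amap
    exact continuous_const.add (continuous_id.sub (hc0.smul continuous_const))
  exact isClosed_le ((hc0).add hcA.norm) continuous_const

lemma mem_Kset_of (v : EuclideanSpace ℝ (Fin (n+1))) (h1 : minkE n v v = -1)
    (h2 : v 0 < 0) : v ∈ Kset n := by
  have hsq : ‖Amap n v‖ ^ 2 = v 0 ^ 2 := by rw [Amap_sq, h1]; ring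
  have hA : ‖Amap n v‖ = |v 0| := by
    rw [← Real.sqrt_sq (norm_nonneg _), hsq, Real.sqrt_sq_eq_abs]
  show v 0 + ‖Amap n v‖ ≤ 0
  rw [hA, abs_of_neg h2]; linarith

lemma minkE_le_of_mem_Kset (w : EuclideanSpace ℝ (Fin (n+1))) (hw : w ∈ Kset n) :
    minkE n w w ≤ -1 := by
  have h1 : w 0 + ‖Amap n w‖ ≤ 0 := hw
  have h2 : ‖Amap n w‖ ^ 2 ≤ w 0 ^ 2 := by nlinarith [norm_nonneg (Amap n w)]
  have := Amap_sq n w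
  nlinarith

lemma minkE_T (v : EuclideanSpace ℝ (Fin (n+1))) :
    minkE n (EuclideanSpace.single 0 1) v = -(v 0) := by
  simp only [minkE, EuclideanSpace.single_apply]
  have : ∑ i, (if i = (0:Fin (n+1)) then (1:ℝ) else 0) * v i = v 0 := by
    rw [Finset.sum_eq_single 0]
    · simp
    · intro b _ hb; simp [hb]
    · intro h; exact absurd (Finset.mem_univ _) h
  rw [this]; simp; ring

end K

/-- For a semiconcave a.e.-differentiable solution of the eikonal equation
g(∇u,∇u) = −1 which is a viscosity supersolution, every reachable gradient v
satisfies g(v,v) = −1, and every supergradient satisfies g(w,w) ≤ −1 provided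
all reachable gradients at the point are past-directed (g(T,·) > 0 for the
time-orientation vector T = e₀). -/
theorem stmt16 (n : ℕ) (u : EuclideanSpace ℝ (Fin (n+1)) → ℝ) (C : ℝ)
    (hsc : ConcaveOn ℝ Set.univ (fun x => u x - C / 2 * ‖x‖ ^ 2))
    (hsuper : ∀ x v, IsSubGradAt u x v → minkE n v v ≥ -1)
    (hae : ∀ᵐ x ∂(MeasureTheory.volume), DifferentiableAt ℝ u x)
    (heik : ∀ x, DifferentiableAt ℝ u x → minkE n (gradient u x) (gradient u x) = -1)
    (T : EuclideanSpace ℝ (Fin (n+1))) (hT : T = EuclideanSpace.single 0 1) :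
    (∀ x v, IsReachableGrad u x v → minkE n v v = -1) ∧
    (∀ x, (∀ v, IsReachableGrad u x v → minkE n T v > 0) →
      ∀ w, IsSuperGradAt u x w → minkE n w w ≤ -1) := by
  classical
  have part1 : ∀ x v, IsReachableGrad u x v → minkE n v v = -1 := by
    rintro x v ⟨xk, hdk, hxk, hgk⟩
    have hcont : Continuous (fun z : EuclideanSpace ℝ (Fin (n+1)) => minkE n z z) := by
      unfold minkE
      apply Continuous.sub
      · apply continuous_finset_sum
        intro i _
        exact ((EuclideanSpace.proj i).continuous).mul ((EuclideanSpace.proj i).continuous)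
      · exact (continuous_const.mul
          (EuclideanSpace.proj (0 : Fin (n+1))).continuous).mul
          (EuclideanSpace.proj (0 : Fin (n+1))).continuous
    have h1 : Filter.Tendsto (fun k => minkE n (gradient u (xk k)) (gradient u (xk k)))
        Filter.atTop (nhds (minkE n v v)) := (hcont.tendsto v).comp hgk
    have h2 : (fun k => minkE n (gradient u (xk k)) (gradient u (xk k))) = fun _ => (-1:ℝ) :=
      funext fun k => heik _ (hdk k)
    rw [h2] at h1
    exact tendsto_nhds_unique h1 tendsto_const_nhds
  refine ⟨part1, ?_⟩
  intro x hpast w hw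
  have hwK : w ∈ Kset n := by
    by_contra hnot
    obtain ⟨f, c, hfa, hfw⟩ :=
      geometric_hahn_banach_closed_point (Kset_convex n) (Kset_closed n) hnot
    set d := -((InnerProductSpace.toDual ℝ (EuclideanSpace ℝ (Fin (n+1)))).symm f) with hd
    obtain ⟨v, hvr, hvle⟩ := lemA hsc hae hw d
    have hfv : ∀ z : EuclideanSpace ℝ (Fin (n+1)), (inner ℝ z d : ℝ) = - f z := by
      intro z
      rw [hd, inner_neg_right, real_inner_comm, InnerProductSpace.toDual_symm_apply]
    rw [hfv v, hfv w] at hvle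
    have hv0 : v 0 < 0 := by
      have := hpast v hvr
      rw [hT, minkE_T] at this
      linarith
    have hvK : v ∈ Kset n := mem_Kset_of n v (part1 x v hvr) hv0
    have := hfa v hvK
    linarith
  exact minkE_le_of_mem_Kset n w hwK
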